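/- arXiv:1912.10733 — 5 statements merged into one kernel-verified Lean document; each statement's English description precedes it below -/
import Mathlib

section
/- For any x in R₊³ there exists a unique b ≥ 0 solving b = Σᵢ vᵢ mᵢ(b) xᵢ. Moreover this solution b*(x) is positive when x ≠ 0, and b*(0) = 0. -/
/-!
The right-hand side `g b = Σᵢ vᵢ mᵢ(b) xᵢ` is continuous, nonnegative and antitone on `[0, ∞)`.
Hence `g` maps `0` above itself and `g 0` below itself, and the intermediate value theorem gives a
fixed point in `[0, g 0]`. An antitone map has at most one fixed point: if `a ≤ b` are both fixed,
then `b = g b ≤ g a = a`. Finally a fixed point equals `g b`, which is positive as soon as some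
`xᵢ` is, and is `0` when `x = 0`.
-/

open Set Function

theorem AntitoneOn.exists_mem_Icc_isFixedPt {α : Type*} [ConditionallyCompleteLinearOrder α]
    [TopologicalSpace α] [OrderTopology α] [DenselyOrdered α] {g : α → α} {a : α}
    (hg : ContinuousOn g (Icc a (g a))) (hanti : AntitoneOn g (Icc a (g a))) (ha : a ≤ g a) :
    ∃ c ∈ Icc a (g a), IsFixedPt g c :=
  _root_.exists_mem_Icc_isFixedPt hg ha ha (hanti ⟨le_rfl, ha⟩ ⟨ha, le_rfl⟩ ha)

theorem AntitoneOn.isFixedPt_eq {α : Type*} [LinearOrder α] {g : α → α} {s : Set α}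
    (hanti : AntitoneOn g s) {a b : α} (ha : a ∈ s) (hb : b ∈ s)
    (hfa : IsFixedPt g a) (hfb : IsFixedPt g b) : a = b := by
  wlog hab : a ≤ b generalizing a b
  · exact (this hb ha hfb hfa (le_of_not_ge hab)).symm
  refine le_antisymm hab ?_
  calc b = g b := hfb.symm
    _ ≤ g a := hanti ha hb hab
    _ = a := hfa

theorem AntitoneOn.mul_mul_const {f : ℝ → ℝ} {s : Set ℝ} (hf : AntitoneOn f s)
    {c x : ℝ} (hc : 0 ≤ c) (hx : 0 ≤ x) : AntitoneOn (fun b => c * f b * x) s :=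
  fun _ ha _ hb hab => mul_le_mul_of_nonneg_right (mul_le_mul_of_nonneg_left (hf ha hb hab) hc) hx

theorem add_add_mul_pos_of_not_all_zero {c1 c2 c3 x1 x2 x3 : ℝ}
    (hc1 : 0 < c1) (hc2 : 0 < c2) (hc3 : 0 < c3) (h1 : 0 ≤ x1) (h2 : 0 ≤ x2) (h3 : 0 ≤ x3)
    (hx : ¬(x1 = 0 ∧ x2 = 0 ∧ x3 = 0)) : 0 < c1 * x1 + c2 * x2 + c3 * x3 := by
  by_contra! hle
  have := mul_nonneg hc1.le h1
  have := mul_nonneg hc2.le h2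
  have := mul_nonneg hc3.le h3
  exact hx ⟨by nlinarith, by nlinarith, by nlinarith⟩

/-- Existence and uniqueness of b*(x): for continuous decreasing positive recruitment
    rates mᵢ and positive weights vᵢ, for every nonnegative x ∈ ℝ³ the equation
    b = Σᵢ vᵢ mᵢ(b) xᵢ has a unique nonnegative solution, which is positive iff x ≠ 0. -/
theorem stmt_5 (m1 m2 m3 : ℝ → ℝ)
    (hc1 : Continuous m1) (hc2 : Continuous m2) (hc3 : Continuous m3)
    (ha1 : AntitoneOn m1 (Set.Ici 0)) (ha2 : AntitoneOn m2 (Set.Ici 0))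
    (ha3 : AntitoneOn m3 (Set.Ici 0))
    (hp1 : ∀ b, 0 ≤ b → 0 < m1 b) (hp2 : ∀ b, 0 ≤ b → 0 < m2 b)
    (hp3 : ∀ b, 0 ≤ b → 0 < m3 b)
    (v1 v2 v3 : ℝ) (hv1 : 0 < v1) (hv2 : 0 < v2) (hv3 : 0 < v3)
    (x1 x2 x3 : ℝ) (h1 : 0 ≤ x1) (h2 : 0 ≤ x2) (h3 : 0 ≤ x3) :
    (∃! b : ℝ, 0 ≤ b ∧ b = v1 * m1 b * x1 + v2 * m2 b * x2 + v3 * m3 b * x3) ∧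
    (∀ b : ℝ, 0 ≤ b → b = v1 * m1 b * x1 + v2 * m2 b * x2 + v3 * m3 b * x3 →
      ((¬(x1 = 0 ∧ x2 = 0 ∧ x3 = 0) → 0 < b) ∧ ((x1 = 0 ∧ x2 = 0 ∧ x3 = 0) → b = 0))) := by
  set g : ℝ → ℝ := fun b => v1 * m1 b * x1 + v2 * m2 b * x2 + v3 * m3 b * x3
  have hg_cont : Continuous g := by fun_prop
  have hg_anti : AntitoneOn g (Ici 0) :=
    ((ha1.mul_mul_const hv1.le h1).add (ha2.mul_mul_const hv2.le h2)).add
      (ha3.mul_mul_const hv3.le h3)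
  have hg0 : 0 ≤ g 0 := by
    have := hp1 0 le_rfl; have := hp2 0 le_rfl; have := hp3 0 le_rfl
    positivity
  obtain ⟨b₀, hb₀, hfix₀⟩ := AntitoneOn.exists_mem_Icc_isFixedPt hg_cont.continuousOn
    (hg_anti.mono Icc_subset_Ici_self) hg0
  refine ⟨⟨b₀, ⟨hb₀.1, hfix₀.symm⟩, fun b hb => hg_anti.isFixedPt_eq hb.1 hb₀.1 hb.2.symm hfix₀⟩,
    fun b hb hfix => ⟨fun hx => ?_, fun ⟨hx1, hx2, hx3⟩ => ?_⟩⟩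
  · rw [hfix]
    exact add_add_mul_pos_of_not_all_zero (by have := hp1 b hb; positivity)
      (by have := hp2 b hb; positivity) (by have := hp3 b hb; positivity) h1 h2 h3 hx
  · simpa [hx1, hx2, hx3] using hfix
end

section
/- For any fixed nonzero x in R₊³, the map λ ↦ b*(λx) is strictly increasing on [0, ∞). -/
/-!
Write `b*(λx) = λ F(b*(λx))` with `F b = Σᵢ vᵢ mᵢ(b) xᵢ`, which is positive and antitone.
If `λ < μ` but `b*(μx) ≤ b*(λx)`, then
`b*(λx) = λ F(b*(λx)) ≤ λ F(b*(μx)) < μ F(b*(μx)) = b*(μx)`, a contradiction.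
-/

open Set

theorem strictMonoOn_of_eq_mul_antitoneOn {F β : ℝ → ℝ} (hF : AntitoneOn F (Ici 0))
    (hF_pos : ∀ b, 0 ≤ b → 0 < F b) (hβ_nonneg : ∀ l, 0 ≤ l → 0 ≤ β l)
    (hβ : ∀ l, 0 ≤ l → β l = l * F (β l)) :
    StrictMonoOn β (Ici 0) := by
  intro a ha b hb hab
  by_contra! hle
  have hFle : F (β a) ≤ F (β b) := hF (hβ_nonneg b hb) (hβ_nonneg a ha) hle
  have : β a < β b :=
    calc β a = a * F (β a) := hβ a ha
      _ ≤ a * F (β b) := mul_le_mul_of_nonneg_left hFle ha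
      _ < b * F (β b) := mul_lt_mul_of_pos_right hab (hF_pos _ (hβ_nonneg b hb))
      _ = β b := (hβ b hb).symm
  exact this.not_ge hle

theorem AntitoneOn.const_mul_mul_const {m : ℝ → ℝ} {s : Set ℝ} (hm : AntitoneOn m s)
    {c x : ℝ} (hc : 0 ≤ c) (hx : 0 ≤ x) : AntitoneOn (fun b ↦ c * m b * x) s :=
  fun _ ha _ hb hab ↦
    mul_le_mul_of_nonneg_right (mul_le_mul_of_nonneg_left (hm ha hb hab) hc) hx

theorem add_add_pos_of_nonneg_of_ne_zero {c₁ c₂ c₃ x₁ x₂ x₃ : ℝ}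
    (hc₁ : 0 < c₁) (hc₂ : 0 < c₂) (hc₃ : 0 < c₃)
    (hx₁ : 0 ≤ x₁) (hx₂ : 0 ≤ x₂) (hx₃ : 0 ≤ x₃) (hne : ¬(x₁ = 0 ∧ x₂ = 0 ∧ x₃ = 0)) :
    0 < c₁ * x₁ + c₂ * x₂ + c₃ * x₃ := by
  have h₁ := mul_nonneg hc₁.le hx₁
  have h₂ := mul_nonneg hc₂.le hx₂
  have h₃ := mul_nonneg hc₃.le hx₃
  rcases hx₁.eq_or_lt with rfl | hx₁
  · rcases hx₂.eq_or_lt with rfl | hx₂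
    · rcases hx₃.eq_or_lt with rfl | hx₃
      · exact absurd ⟨rfl, rfl, rfl⟩ hne
      · linarith [mul_pos hc₃ hx₃]
    · linarith [mul_pos hc₂ hx₂]
  · linarith [mul_pos hc₁ hx₁]

theorem stmt_6_general (m1 m2 m3 : ℝ → ℝ)
    (ha1 : AntitoneOn m1 (Set.Ici 0)) (ha2 : AntitoneOn m2 (Set.Ici 0))
    (ha3 : AntitoneOn m3 (Set.Ici 0))
    (hp1 : ∀ b, 0 ≤ b → 0 < m1 b) (hp2 : ∀ b, 0 ≤ b → 0 < m2 b)
    (hp3 : ∀ b, 0 ≤ b → 0 < m3 b)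
    (v1 v2 v3 : ℝ) (hv1 : 0 < v1) (hv2 : 0 < v2) (hv3 : 0 < v3)
    (bstar : ℝ → ℝ → ℝ → ℝ)
    (hb : ∀ y1 y2 y3 : ℝ, 0 ≤ y1 → 0 ≤ y2 → 0 ≤ y3 →
      0 ≤ bstar y1 y2 y3 ∧
      bstar y1 y2 y3 = v1 * m1 (bstar y1 y2 y3) * y1 + v2 * m2 (bstar y1 y2 y3) * y2
        + v3 * m3 (bstar y1 y2 y3) * y3)
    (x1 x2 x3 : ℝ) (h1 : 0 ≤ x1) (h2 : 0 ≤ x2) (h3 : 0 ≤ x3)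
    (hne : ¬(x1 = 0 ∧ x2 = 0 ∧ x3 = 0)) :
    StrictMonoOn (fun l : ℝ => bstar (l * x1) (l * x2) (l * x3)) (Set.Ici 0) := by
  set F : ℝ → ℝ := fun b ↦ v1 * m1 b * x1 + v2 * m2 b * x2 + v3 * m3 b * x3
  have hb' (l : ℝ) (hl : 0 ≤ l) :=
    hb (l * x1) (l * x2) (l * x3) (mul_nonneg hl h1) (mul_nonneg hl h2) (mul_nonneg hl h3)
  refine strictMonoOn_of_eq_mul_antitoneOn (F := F) ?_ ?_ (fun l hl ↦ (hb' l hl).1) ?_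
  · exact ((ha1.const_mul_mul_const hv1.le h1).add (ha2.const_mul_mul_const hv2.le h2)).add
      (ha3.const_mul_mul_const hv3.le h3)
  · intro b hb0
    have := add_add_pos_of_nonneg_of_ne_zero (mul_pos hv1 (hp1 b hb0))
      (mul_pos hv2 (hp2 b hb0)) (mul_pos hv3 (hp3 b hb0)) h1 h2 h3 hne
    simpa only [F] using this
  · intro l hl
    simp only [F]
    linear_combination (hb' l hl).2

/-- For fixed nonzero nonnegative x ∈ ℝ³, the map λ ↦ b*(λx) is strictly
    increasing on [0,∞), where b*(y) is the unique nonnegative solution of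
    b = Σᵢ vᵢ mᵢ(b) yᵢ. -/
theorem stmt_6 (m1 m2 m3 : ℝ → ℝ)
    (hc1 : Continuous m1) (hc2 : Continuous m2) (hc3 : Continuous m3)
    (ha1 : AntitoneOn m1 (Set.Ici 0)) (ha2 : AntitoneOn m2 (Set.Ici 0))
    (ha3 : AntitoneOn m3 (Set.Ici 0))
    (hp1 : ∀ b, 0 ≤ b → 0 < m1 b) (hp2 : ∀ b, 0 ≤ b → 0 < m2 b)
    (hp3 : ∀ b, 0 ≤ b → 0 < m3 b)
    (v1 v2 v3 : ℝ) (hv1 : 0 < v1) (hv2 : 0 < v2) (hv3 : 0 < v3)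
    (bstar : ℝ → ℝ → ℝ → ℝ)
    (hb : ∀ y1 y2 y3 : ℝ, 0 ≤ y1 → 0 ≤ y2 → 0 ≤ y3 →
      0 ≤ bstar y1 y2 y3 ∧
      bstar y1 y2 y3 = v1 * m1 (bstar y1 y2 y3) * y1 + v2 * m2 (bstar y1 y2 y3) * y2
        + v3 * m3 (bstar y1 y2 y3) * y3)
    (x1 x2 x3 : ℝ) (h1 : 0 ≤ x1) (h2 : 0 ≤ x2) (h3 : 0 ≤ x3)
    (hne : ¬(x1 = 0 ∧ x2 = 0 ∧ x3 = 0)) :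
    StrictMonoOn (fun l : ℝ => bstar (l * x1) (l * x2) (l * x3)) (Set.Ici 0) :=
  stmt_6_general m1 m2 m3 ha1 ha2 ha3 hp1 hp2 hp3 v1 v2 v3 hv1 hv2 hv3 bstar hb x1 x2 x3 h1 h2 h3
    hne
end

section
/- (Polymorphic trajectories are holomorphic) For a solution x(t) of system (F) with u_A·x(0) ≠ 0 and u_a·x(0) ≠ 0, all three components x₁(t), x₂(t), x₃(t) are strictly positive for all t > 0. -/
open Matrix Filter Topology

noncomputable def uA : Fin 3 → ℝ := ![1, 1/2, 0]
noncomputable def ua : Fin 3 → ℝ := ![0, 1/2, 1]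

/-- The heredity map A(y) = ((u_A·y)²/(1·y), 2(u_A·y)(u_a·y)/(1·y), (u_a·y)²/(1·y)). -/
noncomputable def Amap (y : Fin 3 → ℝ) : Fin 3 → ℝ :=
  ![(uA ⬝ᵥ y) ^ 2 / (∑ i, y i),
    2 * (uA ⬝ᵥ y) * (ua ⬝ᵥ y) / (∑ i, y i),
    (ua ⬝ᵥ y) ^ 2 / (∑ i, y i)]

/-! If both alleles are present at time 0, their frequencies `u_A·x` and `u_a·x` can decay at
most exponentially: heredity only adds mass and the death rates are bounded by some `K` on a
compact time interval, so `f' ≥ -K f` and `f(t) e^{Kt}` is nondecreasing. Hence both alleles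
stay present, which makes every component of `A(M(x)x)` strictly positive;
each genotype then has a strictly positive inflow and cannot vanish. -/

open Real Set

section ExponentialLowerBound

variable {f f' : ℝ → ℝ} {K a b : ℝ}

lemma hasDerivAt_mul_exp {t : ℝ} (hf : HasDerivAt f (f' t) t) :
    HasDerivAt (fun s => f s * exp (K * s)) ((f' t + K * f t) * exp (K * t)) t :=
  (hf.mul ((hasDerivAt_id' t).const_mul K).exp).congr_deriv (by ring)

lemma monotoneOn_mul_exp (hf : ∀ t ∈ Icc a b, HasDerivAt f (f' t) t)
    (h : ∀ t ∈ Ioo a b, -K * f t ≤ f' t) :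
    MonotoneOn (fun t => f t * exp (K * t)) (Icc a b) := by
  refine monotoneOn_of_deriv_nonneg (convex_Icc a b)
    (fun t ht => (hasDerivAt_mul_exp (hf t ht)).continuousAt.continuousWithinAt) ?_ ?_ <;>
    rw [interior_Icc] <;> intro t ht
  · exact (hasDerivAt_mul_exp (hf t (Ioo_subset_Icc_self ht))).differentiableAt
      |>.differentiableWithinAt
  · rw [(hasDerivAt_mul_exp (hf t (Ioo_subset_Icc_self ht))).deriv]
    exact mul_nonneg (by linarith [h t ht]) (exp_pos _).le

lemma strictMonoOn_mul_exp (hf : ∀ t ∈ Icc a b, HasDerivAt f (f' t) t)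
    (h : ∀ t ∈ Ioo a b, -K * f t < f' t) :
    StrictMonoOn (fun t => f t * exp (K * t)) (Icc a b) := by
  refine strictMonoOn_of_deriv_pos (convex_Icc a b)
    (fun t ht => (hasDerivAt_mul_exp (hf t ht)).continuousAt.continuousWithinAt) ?_
  rw [interior_Icc]
  intro t ht
  rw [(hasDerivAt_mul_exp (hf t (Ioo_subset_Icc_self ht))).deriv]
  exact mul_pos (by linarith [h t ht]) (exp_pos _)

lemma pos_of_neg_mul_le_deriv (hab : a ≤ b) (hf : ∀ t ∈ Icc a b, HasDerivAt f (f' t) t)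
    (h : ∀ t ∈ Ioo a b, -K * f t ≤ f' t) (ha : 0 < f a) : 0 < f b := by
  have hmono := monotoneOn_mul_exp hf h (left_mem_Icc.2 hab) (right_mem_Icc.2 hab) hab
  exact pos_of_mul_pos_left ((mul_pos ha (exp_pos _)).trans_le hmono) (exp_pos _).le

lemma pos_of_neg_mul_lt_deriv (hab : a < b) (hf : ∀ t ∈ Icc a b, HasDerivAt f (f' t) t)
    (h : ∀ t ∈ Ioo a b, -K * f t < f' t) (ha : 0 ≤ f a) : 0 < f b := by
  have hmono := strictMonoOn_mul_exp hf h (left_mem_Icc.2 hab.le) (right_mem_Icc.2 hab.le) hab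
  exact pos_of_mul_pos_left ((mul_nonneg ha (exp_pos _).le).trans_lt hmono) (exp_pos _).le

lemma dotProduct_pos_of_neg_mul_le_deriv {ι : Type*} [Fintype ι] {x x' : ℝ → ι → ℝ}
    {u : ι → ℝ} (hu : 0 ≤ u) (hab : a ≤ b)
    (hx : ∀ t ∈ Icc a b, ∀ i, HasDerivAt (fun s => x s i) (x' t i) t)
    (h : ∀ t ∈ Ioo a b, ∀ i, -K * x t i ≤ x' t i) (ha : 0 < u ⬝ᵥ x a) :
    0 < u ⬝ᵥ x b := by
  refine pos_of_neg_mul_le_deriv (f := fun t => u ⬝ᵥ x t) (f' := fun t => u ⬝ᵥ x' t)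
    (K := K) hab (fun t ht => ?_) (fun t ht => ?_) ha
  · exact HasDerivAt.fun_sum fun i _ => (hx t ht i).const_mul (u i)
  · simp only [dotProduct, Finset.mul_sum]
    exact Finset.sum_le_sum fun i _ => by
      linarith [mul_le_mul_of_nonneg_left (h t ht i) (hu i)]

end ExponentialLowerBound

lemma exists_forall_le_of_continuousOn {X ι : Type*} [TopologicalSpace X] [Fintype ι]
    {s : Set X} (hs : IsCompact s) {g : ι → X → ℝ} (hg : ∀ i, ContinuousOn (g i) s) :
    ∃ K, ∀ t ∈ s, ∀ i, g i t ≤ K := by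
  obtain ⟨K, hK⟩ := hs.exists_bound_of_continuousOn (continuousOn_pi.2 hg)
  exact ⟨K, fun t ht i =>
    (le_abs_self _).trans ((norm_le_pi_norm (fun i => g i t) i).trans (hK t ht))⟩

lemma dotProduct_mul_pos {ι : Type*} [Fintype ι] {u c v : ι → ℝ} (hu : 0 ≤ u)
    (hc : ∀ i, 0 < c i) (hv : 0 ≤ v) (h : 0 < u ⬝ᵥ v) : 0 < u ⬝ᵥ (c * v) := by
  obtain ⟨i, -, hi⟩ := (Finset.sum_pos_iff_of_nonneg fun i _ => mul_nonneg (hu i) (hv i)).1 h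
  refine (Finset.sum_pos_iff_of_nonneg fun j _ => ?_).2 ⟨i, Finset.mem_univ i, ?_⟩
  · exact mul_nonneg (hu j) (mul_nonneg (hc j).le (hv j))
  · simpa only [Pi.mul_apply, mul_left_comm] using mul_pos (hc i) hi

lemma uA_nonneg : 0 ≤ uA := by
  intro i; fin_cases i <;> norm_num [uA]

lemma ua_nonneg : 0 ≤ ua := by
  intro i; fin_cases i <;> norm_num [ua]

lemma sum_eq_uA_dotProduct_add_ua_dotProduct (y : Fin 3 → ℝ) :
    ∑ i, y i = uA ⬝ᵥ y + ua ⬝ᵥ y := by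
  rw [← add_dotProduct, ← one_dotProduct]
  congr 1
  ext i; fin_cases i <;> norm_num [uA, ua]

lemma Amap_nonneg {y : Fin 3 → ℝ} (hy : 0 ≤ y) (i : Fin 3) : 0 ≤ Amap y i := by
  have hA := dotProduct_nonneg_of_nonneg uA_nonneg hy
  have ha := dotProduct_nonneg_of_nonneg ua_nonneg hy
  have hS : 0 ≤ ∑ j, y j := by rw [sum_eq_uA_dotProduct_add_ua_dotProduct]; positivity
  fin_cases i <;> simp only [Amap] <;> norm_num <;> positivity

lemma Amap_pos {y : Fin 3 → ℝ} (hA : 0 < uA ⬝ᵥ y) (ha : 0 < ua ⬝ᵥ y) (i : Fin 3) :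
    0 < Amap y i := by
  have hS : 0 < ∑ j, y j := by rw [sum_eq_uA_dotProduct_add_ua_dotProduct]; positivity
  fin_cases i <;> simp only [Amap] <;> norm_num <;> positivity

theorem stmt_10_general
    (m : Fin 3 → ℝ → ℝ) (μ : Fin 3 → ℝ → ℝ) (w : Fin 3 → ℝ)
    (bstar : (Fin 3 → ℝ) → ℝ)
    (hm_pos : ∀ i b, 0 ≤ b → 0 < m i b)
    (hμ_cont : ∀ i, Continuous (μ i))
    (hb_nn : ∀ y, 0 ≤ bstar y)
    (x : ℝ → Fin 3 → ℝ)
    (hx_nn : ∀ t, 0 ≤ t → ∀ i, 0 ≤ x t i)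
    (hode : ∀ t, 0 ≤ t → ∀ i,
      HasDerivAt (fun s => x s i)
        (Amap (fun j => m j (bstar (x t)) * x t j) i - μ i (w ⬝ᵥ x t) * x t i) t)
    (hA0 : uA ⬝ᵥ x 0 ≠ 0) (ha0 : ua ⬝ᵥ x 0 ≠ 0) :
    ∀ t, 0 < t → ∀ i, 0 < x t i := by
  intro T hT i
  obtain ⟨K, hK⟩ := exists_forall_le_of_continuousOn (isCompact_Icc (a := 0) (b := T))
    (g := fun j s => μ j (w ⬝ᵥ x s)) fun j s hs =>
      ((hμ_cont j).comp (continuous_const.dotProduct continuous_id)).continuousAt.comp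
        (continuousAt_pi.2 fun k => (hode s hs.1 k).continuousAt) |>.continuousWithinAt
  have hdecay : ∀ s ∈ Ioo 0 T, ∀ j, -K * x s j ≤
      Amap (fun j => m j (bstar (x s)) * x s j) j - μ j (w ⬝ᵥ x s) * x s j := fun s hs j => by
    linarith [Amap_nonneg (fun k => mul_nonneg (hm_pos k (bstar (x s)) (hb_nn _)).le
        (hx_nn s hs.1.le k)) j,
      mul_le_mul_of_nonneg_right (hK s (Ioo_subset_Icc_self hs) j) (hx_nn s hs.1.le j)]
  have hallele : ∀ u, 0 ≤ u → u ⬝ᵥ x 0 ≠ 0 → ∀ s ∈ Icc 0 T,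
      0 < u ⬝ᵥ fun j => m j (bstar (x s)) * x s j := fun u hu h0 s hs =>
    dotProduct_mul_pos hu (fun j => hm_pos j _ (hb_nn _)) (hx_nn s hs.1)
      (dotProduct_pos_of_neg_mul_le_deriv hu hs.1 (fun t ht => hode t ht.1)
        (fun t ht => hdecay t ⟨ht.1, ht.2.trans_le hs.2⟩)
        ((dotProduct_nonneg_of_nonneg hu (hx_nn 0 le_rfl)).lt_of_ne' h0))
  refine pos_of_neg_mul_lt_deriv (K := K) hT (fun s hs => hode s hs.1 i) (fun s hs => ?_)
    (hx_nn 0 le_rfl i)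
  have hs' := Ioo_subset_Icc_self hs
  linarith [Amap_pos (hallele uA uA_nonneg hA0 s hs') (hallele ua ua_nonneg ha0 s hs') i,
    mul_le_mul_of_nonneg_right (hK s hs' i) (hx_nn s hs.1.le i)]

/-- Polymorphic trajectories of system (F): ẋ = A(M(x)x) − μ(w·x)x are
    "holomorphic": if both alleles are present initially, then all three
    genotypes are present (strictly positive) for all positive times. -/
theorem stmt_10
    (m : Fin 3 → ℝ → ℝ) (μ : Fin 3 → ℝ → ℝ) (w : Fin 3 → ℝ)
    (bstar : (Fin 3 → ℝ) → ℝ)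
    (hm_cont : ∀ i, Continuous (m i))
    (hm_anti : ∀ i, AntitoneOn (m i) (Set.Ici 0))
    (hm_pos : ∀ i b, 0 ≤ b → 0 < m i b)
    (hμ_cont : ∀ i, Continuous (μ i))
    (hμ_mono : ∀ i, MonotoneOn (μ i) (Set.Ici 0))
    (hμ_nn : ∀ i z, 0 ≤ z → 0 ≤ μ i z)
    (hw : ∀ i, 0 < w i)
    (hb_nn : ∀ y, 0 ≤ bstar y)
    (x : ℝ → Fin 3 → ℝ)
    (hx_nn : ∀ t, 0 ≤ t → ∀ i, 0 ≤ x t i)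
    (hode : ∀ t, 0 ≤ t → ∀ i,
      HasDerivAt (fun s => x s i)
        (Amap (fun j => m j (bstar (x t)) * x t j) i - μ i (w ⬝ᵥ x t) * x t i) t)
    (hA0 : uA ⬝ᵥ x 0 ≠ 0) (ha0 : ua ⬝ᵥ x 0 ≠ 0) :
    ∀ t, 0 < t → ∀ i, 0 < x t i :=
  stmt_10_general m μ w bstar hm_pos hμ_cont hb_nn x hx_nn hode hA0 ha0
end

section
/- (Hardy-Weinberg invariance of allelic frequencies) In the selectively neutral case, along any nonzero solution x of ẋ = m(b(v·x)) A(x) − μ(w·x) x, the allelic frequencies p_j(t) = (u_j·x(t))/(1·x(t)) are constant in time for j = A, a. -/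
/-!
The heredity map preserves `u_A · x`, `u_a · x` and (since `u_A + u_a = 1`) the total
population `1 · x`. Hence each of these linear functionals `y` satisfies the same scalar
equation `ẏ = (m̂ − μ̂) y`, and the ratio of two solutions of one linear scalar equation has
zero derivative.
-/

open Matrix Filter Topology

theorem div_eq_of_hasDerivAt_mul_self {f g c : ℝ → ℝ} {a : ℝ}
    (hf : ∀ t, a ≤ t → HasDerivAt f (c t * f t) t)
    (hg : ∀ t, a ≤ t → HasDerivAt g (c t * g t) t)
    (hg0 : ∀ t, a ≤ t → g t ≠ 0) :
    ∀ t, a ≤ t → f t / g t = f a / g a := by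
  have hratio : ∀ t, a ≤ t → HasDerivAt (fun s => f s / g s) 0 t := fun t ht =>
    ((hf t ht).div (hg t ht) (hg0 t ht)).congr_deriv (by ring)
  intro t ht
  exact constant_of_has_deriv_right_zero
    (fun s hs => (hratio s hs.1).continuousAt.continuousWithinAt)
    (fun s hs => (hratio s hs.1).hasDerivWithinAt) t ⟨ht, le_rfl⟩

theorem hasDerivAt_dotProduct_of_dotProduct_map_eq {ι : Type*} [Fintype ι]
    {F : (ι → ℝ) → ι → ℝ} {m μ : ℝ} {x : ℝ → ι → ℝ} {t : ℝ} {u : ι → ℝ}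
    (hode : ∀ i, HasDerivAt (fun s => x s i) (m * F (x t) i - μ * x t i) t)
    (hu : u ⬝ᵥ F (x t) = u ⬝ᵥ x t) :
    HasDerivAt (fun s => u ⬝ᵥ x s) ((m - μ) * (u ⬝ᵥ x t)) t := by
  refine (HasDerivAt.fun_sum fun i _ => (hode i).const_mul (u i)).congr_deriv ?_
  calc ∑ i, u i * (m * F (x t) i - μ * x t i)
      = m * (u ⬝ᵥ F (x t)) - μ * (u ⬝ᵥ x t) := by
        simp only [dotProduct, Finset.mul_sum, ← Finset.sum_sub_distrib]
        exact Finset.sum_congr rfl fun i _ => by ring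
    _ = (m - μ) * (u ⬝ᵥ x t) := by rw [hu]; ring

theorem uA_dotProduct_Amap {y : Fin 3 → ℝ} (hy : ∑ i, y i ≠ 0) :
    uA ⬝ᵥ Amap y = uA ⬝ᵥ y := by
  simp only [Amap, uA, ua, dotProduct, Fin.sum_univ_three] at hy ⊢
  simp only [cons_val_zero, cons_val_one, cons_val_two, head_cons, tail_cons]
  field_simp
  ring

theorem ua_dotProduct_Amap {y : Fin 3 → ℝ} (hy : ∑ i, y i ≠ 0) :
    ua ⬝ᵥ Amap y = ua ⬝ᵥ y := by
  simp only [Amap, uA, ua, dotProduct, Fin.sum_univ_three] at hy ⊢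
  simp only [cons_val_zero, cons_val_one, cons_val_two, head_cons, tail_cons]
  field_simp
  ring

theorem uA_add_ua : uA + ua = 1 := by
  ext i
  fin_cases i <;> norm_num [uA, ua]

theorem one_dotProduct_Amap {y : Fin 3 → ℝ} (hy : ∑ i, y i ≠ 0) :
    1 ⬝ᵥ Amap y = 1 ⬝ᵥ y := by
  rw [← uA_add_ua, add_dotProduct, add_dotProduct, uA_dotProduct_Amap hy, ua_dotProduct_Amap hy]

theorem stmt_15_general
    (mhat μhat : ℝ → ℝ)
    (x : ℝ → Fin 3 → ℝ)
    (hx_ne : ∀ t, 0 ≤ t → 0 < ∑ i, x t i)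
    (hode : ∀ t, 0 ≤ t → ∀ i,
      HasDerivAt (fun s => x s i) (mhat t * Amap (x t) i - μhat t * x t i) t) :
    ∀ t, 0 ≤ t →
      (uA ⬝ᵥ x t) / (∑ i, x t i) = (uA ⬝ᵥ x 0) / (∑ i, x 0 i) ∧
      (ua ⬝ᵥ x t) / (∑ i, x t i) = (ua ⬝ᵥ x 0) / (∑ i, x 0 i) := by
  have hpop : ∀ t, 0 ≤ t → HasDerivAt (fun s => ∑ i, x s i)
      ((mhat t - μhat t) * ∑ i, x t i) t := fun t ht => by
    simpa only [one_dotProduct] using hasDerivAt_dotProduct_of_dotProduct_map_eq (hode t ht)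
      (one_dotProduct_Amap (hx_ne t ht).ne')
  have hfreq : ∀ u : Fin 3 → ℝ, (∀ y : Fin 3 → ℝ, ∑ i, y i ≠ 0 → u ⬝ᵥ Amap y = u ⬝ᵥ y) →
      ∀ t, 0 ≤ t → (u ⬝ᵥ x t) / (∑ i, x t i) = (u ⬝ᵥ x 0) / (∑ i, x 0 i) := fun u hu =>
    div_eq_of_hasDerivAt_mul_self
      (fun t ht => hasDerivAt_dotProduct_of_dotProduct_map_eq (hode t ht)
        (hu _ (hx_ne t ht).ne'))
      hpop (fun t ht => (hx_ne t ht).ne')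
  exact fun t ht => ⟨hfreq uA (fun _ => uA_dotProduct_Amap) t ht,
    hfreq ua (fun _ => ua_dotProduct_Amap) t ht⟩

/-- Hardy–Weinberg invariance of allelic frequencies: in the selectively
    neutral system ẋ = m̂(t)A(x) − μ̂(t)x, the allelic frequencies
    (u_j·x)/(1·x), j = A, a, are constant in time. -/
theorem stmt_15
    (mhat μhat : ℝ → ℝ) (hmc : Continuous mhat) (hμc : Continuous μhat)
    (x : ℝ → Fin 3 → ℝ)
    (hx_nn : ∀ t, 0 ≤ t → ∀ i, 0 ≤ x t i)
    (hx_ne : ∀ t, 0 ≤ t → 0 < ∑ i, x t i)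
    (hode : ∀ t, 0 ≤ t → ∀ i,
      HasDerivAt (fun s => x s i) (mhat t * Amap (x t) i - μhat t * x t i) t) :
    ∀ t, 0 ≤ t →
      (uA ⬝ᵥ x t) / (∑ i, x t i) = (uA ⬝ᵥ x 0) / (∑ i, x 0 i) ∧
      (ua ⬝ᵥ x t) / (∑ i, x t i) = (ua ⬝ᵥ x 0) / (∑ i, x 0 i) :=
  stmt_15_general mhat μhat x hx_ne hode
end

section
/- (Conservation law leading to Hardy-Weinberg asymptotics) In the selectively neutral case with constant allele frequencies p_A, p_a, the quantities y₁ = x₁/p_A² − x₂/(2 p_A p_a) and y₂ = x₃/p_a² − x₂/(2 p_A p_a) each satisfy ẏ + μ̂(t) y = 0; consequently if ∫₀^∞ μ̂(t) dt = ∞ then y₁(t) → 0 and y₂(t) → 0 as t → ∞. -/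
open Matrix Filter Topology

/-! With constant allele frequencies the heredity map produces the Hardy–Weinberg proportions
`(p_A², 2 p_A p_a, p_a²)` of the total population `S`. Hence in `x₀ / p_A² - x₁ / (2 p_A p_a)`
the birth terms `m̂ S` cancel and only the death term survives: `ẏ = -μ̂ y`. The integrating
factor `exp (∫₀ᵗ μ̂)` makes `y · exp (∫₀ᵗ μ̂)` constant, so `y t = y 0 · exp (-∫₀ᵗ μ̂) → 0`. -/

theorem Amap_eq_of_allele_freq {y : Fin 3 → ℝ} {pA pa : ℝ} (hS : ∑ i, y i ≠ 0)
    (hA : uA ⬝ᵥ y = pA * ∑ i, y i) (ha : ua ⬝ᵥ y = pa * ∑ i, y i) :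
    Amap y = fun i => ![pA ^ 2, 2 * pA * pa, pa ^ 2] i * ∑ j, y j := by
  ext i
  fin_cases i <;>
    simp only [Amap, hA, ha, Fin.zero_eta, Fin.mk_one, Fin.reduceFinMk, Fin.isValue, cons_val_zero,
      cons_val_one, cons_val] <;> field_simp

theorem hasDerivAt_div_sub_div_of_proportional_births {u v : ℝ → ℝ} {t m μ S a b : ℝ}
    (ha : a ≠ 0) (hb : b ≠ 0)
    (hu : HasDerivAt u (m * (a * S) - μ * u t) t) (hv : HasDerivAt v (m * (b * S) - μ * v t) t) :
    HasDerivAt (fun s => u s / a - v s / b) (-μ * (u t / a - v t / b)) t := by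
  refine ((hu.div_const a).sub (hv.div_const b)).congr_deriv ?_
  field_simp
  ring

theorem eq_mul_exp_neg_integral_of_hasDerivAt {μ y : ℝ → ℝ} (hμ : Continuous μ)
    (hy : ∀ t, 0 ≤ t → HasDerivAt y (-μ t * y t) t) {T : ℝ} (hT : 0 ≤ T) :
    y T = y 0 * Real.exp (-∫ s in (0:ℝ)..T, μ s) := by
  set M : ℝ → ℝ := fun t => ∫ s in (0:ℝ)..t, μ s
  have hg : ∀ t, 0 ≤ t → HasDerivAt (fun t => y t * Real.exp (M t)) 0 t := fun t ht =>
    ((hy t ht).mul (hμ.integral_hasStrictDerivAt 0 t).hasDerivAt.exp).congr_deriv (by ring)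
  have hconst := constant_of_has_deriv_right_zero (a := 0) (b := T)
    (fun s hs => (hg s hs.1).continuousAt.continuousWithinAt)
    (fun s hs => (hg s hs.1).hasDerivWithinAt) T ⟨hT, le_rfl⟩
  simp only [M, intervalIntegral.integral_same, Real.exp_zero, mul_one] at hconst
  rw [Real.exp_neg, ← hconst, mul_inv_cancel_right₀ (Real.exp_pos _).ne']

theorem tendsto_zero_of_hasDerivAt_neg_mul {μ y : ℝ → ℝ} (hμ : Continuous μ)
    (hy : ∀ t, 0 ≤ t → HasDerivAt y (-μ t * y t) t)
    (hint : Tendsto (fun T => ∫ t in (0:ℝ)..T, μ t) atTop atTop) :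
    Tendsto y atTop (𝓝 0) := by
  have hexp : Tendsto (fun T => y 0 * Real.exp (-∫ t in (0:ℝ)..T, μ t)) atTop (𝓝 0) := by
    simpa using (Real.tendsto_exp_atBot.comp (tendsto_neg_atTop_atBot.comp hint)).const_mul (y 0)
  refine hexp.congr' ?_
  filter_upwards [eventually_ge_atTop 0] with T hT
  exact (eq_mul_exp_neg_integral_of_hasDerivAt hμ hy hT).symm

theorem stmt_16_general
    (mhat μhat : ℝ → ℝ) (hμc : Continuous μhat)
    (pA pa : ℝ) (hpA : 0 < pA) (hpa : 0 < pa)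
    (x : ℝ → Fin 3 → ℝ)
    (hx_ne : ∀ t, 0 ≤ t → 0 < ∑ i, x t i)
    (hfreqA : ∀ t, 0 ≤ t → uA ⬝ᵥ x t = pA * (∑ i, x t i))
    (hfreqa : ∀ t, 0 ≤ t → ua ⬝ᵥ x t = pa * (∑ i, x t i))
    (hode : ∀ t, 0 ≤ t → ∀ i,
      HasDerivAt (fun s => x s i) (mhat t * Amap (x t) i - μhat t * x t i) t) :
    (∀ t, 0 ≤ t →
      HasDerivAt (fun s => x s 0 / pA ^ 2 - x s 1 / (2 * pA * pa))
        (-μhat t * (x t 0 / pA ^ 2 - x t 1 / (2 * pA * pa))) t ∧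
      HasDerivAt (fun s => x s 2 / pa ^ 2 - x s 1 / (2 * pA * pa))
        (-μhat t * (x t 2 / pa ^ 2 - x t 1 / (2 * pA * pa))) t) ∧
    (Tendsto (fun T => ∫ t in (0:ℝ)..T, μhat t) atTop atTop →
      Tendsto (fun t => x t 0 / pA ^ 2 - x t 1 / (2 * pA * pa)) atTop (nhds 0) ∧
      Tendsto (fun t => x t 2 / pa ^ 2 - x t 1 / (2 * pA * pa)) atTop (nhds 0)) := by
  have hderiv : ∀ t, 0 ≤ t →
      HasDerivAt (fun s => x s 0 / pA ^ 2 - x s 1 / (2 * pA * pa))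
        (-μhat t * (x t 0 / pA ^ 2 - x t 1 / (2 * pA * pa))) t ∧
      HasDerivAt (fun s => x s 2 / pa ^ 2 - x s 1 / (2 * pA * pa))
        (-μhat t * (x t 2 / pa ^ 2 - x t 1 / (2 * pA * pa))) t := by
    intro t ht
    have hx := hode t ht
    simp only [Amap_eq_of_allele_freq (hx_ne t ht).ne' (hfreqA t ht) (hfreqa t ht)] at hx
    have h2papa : 2 * pA * pa ≠ 0 := by positivity
    exact ⟨hasDerivAt_div_sub_div_of_proportional_births (by positivity) h2papa (hx 0) (hx 1),
      hasDerivAt_div_sub_div_of_proportional_births (by positivity) h2papa (hx 2) (hx 1)⟩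
  exact ⟨hderiv, fun hint =>
    ⟨tendsto_zero_of_hasDerivAt_neg_mul hμc (fun t ht => (hderiv t ht).1) hint,
      tendsto_zero_of_hasDerivAt_neg_mul hμc (fun t ht => (hderiv t ht).2) hint⟩⟩

/-- Conservation law leading to Hardy–Weinberg asymptotics: in the selectively
    neutral case with constant positive allele frequencies p_A + p_a = 1, the
    quantities y₁ = x₁/p_A² − x₂/(2p_Ap_a) and y₂ = x₃/p_a² − x₂/(2p_Ap_a)
    satisfy ẏ = −μ̂(t)y, and tend to 0 when ∫₀^∞ μ̂ = ∞. -/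
theorem stmt_16
    (mhat μhat : ℝ → ℝ) (hmc : Continuous mhat) (hμc : Continuous μhat)
    (hμnn : ∀ t, 0 ≤ t → 0 ≤ μhat t)
    (pA pa : ℝ) (hpA : 0 < pA) (hpa : 0 < pa) (hsum : pA + pa = 1)
    (x : ℝ → Fin 3 → ℝ)
    (hx_nn : ∀ t, 0 ≤ t → ∀ i, 0 ≤ x t i)
    (hx_ne : ∀ t, 0 ≤ t → 0 < ∑ i, x t i)
    (hfreqA : ∀ t, 0 ≤ t → uA ⬝ᵥ x t = pA * (∑ i, x t i))
    (hfreqa : ∀ t, 0 ≤ t → ua ⬝ᵥ x t = pa * (∑ i, x t i))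
    (hode : ∀ t, 0 ≤ t → ∀ i,
      HasDerivAt (fun s => x s i) (mhat t * Amap (x t) i - μhat t * x t i) t) :
    (∀ t, 0 ≤ t →
      HasDerivAt (fun s => x s 0 / pA ^ 2 - x s 1 / (2 * pA * pa))
        (-μhat t * (x t 0 / pA ^ 2 - x t 1 / (2 * pA * pa))) t ∧
      HasDerivAt (fun s => x s 2 / pa ^ 2 - x s 1 / (2 * pA * pa))
        (-μhat t * (x t 2 / pa ^ 2 - x t 1 / (2 * pA * pa))) t) ∧
    (Tendsto (fun T => ∫ t in (0:ℝ)..T, μhat t) atTop atTop →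
      Tendsto (fun t => x t 0 / pA ^ 2 - x t 1 / (2 * pA * pa)) atTop (nhds 0) ∧
      Tendsto (fun t => x t 2 / pa ^ 2 - x t 1 / (2 * pA * pa)) atTop (nhds 0)) :=
  stmt_16_general mhat μhat hμc pA pa hpA hpa x hx_ne hfreqA hfreqa hode
end
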